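/- arXiv:0907.0664 — 6 statements merged into one kernel-verified Lean document; each statement's English description precedes it below -/
import Mathlib

section
/- Let X^{(i)} be defined recursively from a nonvanishing sequence u₀, a nonvanishing sequence p, a sequence r, and a base point n₀ by: X^{(0)} = 1; for i even (i ≥ 2), X^{(i)}(n) = Σ*_{s=n₀}^{n-1} X^{(i-1)}(s)/(p(s)u₀(s)u₀(s+1)); for i odd, X^{(i)}(n) = Σ*_{s=n₀}^{n-1} u₀(s+1)² X^{(i-1)}(s+1) r(s+1), where Σ* denotes the indefinite sum vanishing at n₀. Then for every k ≥ 1 and every m with n₀ - k + 1 ≤ m ≤ n₀ + k, we have X^{(2k)}(m) = 0. -/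
/-- The indefinite sum of `f` vanishing at `n₀`. -/
noncomputable def istar (n₀ : ℤ) (f : ℤ → ℂ) (n : ℤ) : ℂ :=
  if n₀ ≤ n then ∑ j ∈ Finset.Ico n₀ n, f j else -∑ j ∈ Finset.Ico n n₀, f j

/-- The sequences `X⁽ⁱ⁾`: `X⁽⁰⁾ = 1`, even steps sum `X⁽ⁱ⁻¹⁾(s)/(p(s)u₀(s)u₀(s+1))`,
odd steps sum `u₀(s+1)² X⁽ⁱ⁻¹⁾(s+1) r(s+1)`. -/
noncomputable def Xseq (u₀ p r : ℤ → ℂ) (n₀ : ℤ) : ℕ → ℤ → ℂ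
  | 0 => fun _ => 1
  | i + 1 =>
      if (i + 1) % 2 = 0 then
        istar n₀ (fun s => Xseq u₀ p r n₀ i s / (p s * u₀ s * u₀ (s + 1)))
      else
        istar n₀ (fun s => u₀ (s + 1) ^ 2 * Xseq u₀ p r n₀ i (s + 1) * r (s + 1))

/-- The sequences `Y⁽ⁱ⁾`: `Y⁽⁰⁾ = 1`, with the parity roles exchanged. -/
noncomputable def Yseq (u₀ p r : ℤ → ℂ) (n₀ : ℤ) : ℕ → ℤ → ℂ
  | 0 => fun _ => 1
  | i + 1 =>
      if (i + 1) % 2 = 0 then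
        istar n₀ (fun s => u₀ (s + 1) ^ 2 * Yseq u₀ p r n₀ i (s + 1) * r (s + 1))
      else
        istar n₀ (fun s => Yseq u₀ p r n₀ i s / (p s * u₀ s * u₀ (s + 1)))

/-!
An indefinite sum `Σ*` vanishing at `n₀` vanishes on a window `[a, b] ∋ n₀` as soon as its
summand vanishes on `[a, b)`. The odd steps read `X⁽ⁱ⁻¹⁾` at `s + 1`, so starting from
`X⁽¹⁾(n₀) = 0` the windows grow by one on each side every two steps: `X⁽²ᵏ⁺¹⁾` vanishes on
`[n₀ - k, n₀ + k]` and `X⁽²ᵏ⁺²⁾` on `[n₀ - k, n₀ + k + 1]`.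
-/

open Set

theorem istar_eqOn_zero {n₀ a b : ℤ} {f : ℤ → ℂ} (ha : a ≤ n₀) (hb : n₀ ≤ b)
    (hf : EqOn f 0 (Ico a b)) : EqOn (istar n₀ f) 0 (Icc a b) := by
  rintro m ⟨ham, hmb⟩
  unfold istar
  split_ifs
  · refine Finset.sum_eq_zero fun j hj => hf ?_
    rw [Finset.mem_Ico] at hj
    exact ⟨ha.trans hj.1, hj.2.trans_le hmb⟩
  · refine neg_eq_zero.mpr <| Finset.sum_eq_zero fun j hj => hf ?_
    rw [Finset.mem_Ico] at hj
    exact ⟨ham.trans hj.1, hj.2.trans_le hb⟩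

section

variable (u₀ p r : ℤ → ℂ) (n₀ : ℤ)

theorem Xseq_two_mul_add_one (k : ℕ) :
    Xseq u₀ p r n₀ (2 * k + 1) =
      istar n₀ fun s => u₀ (s + 1) ^ 2 * Xseq u₀ p r n₀ (2 * k) (s + 1) * r (s + 1) := by
  rw [Xseq, if_neg (by omega)]

theorem Xseq_two_mul_add_two (k : ℕ) :
    Xseq u₀ p r n₀ (2 * k + 2) =
      istar n₀ fun s => Xseq u₀ p r n₀ (2 * k + 1) s / (p s * u₀ s * u₀ (s + 1)) := by
  rw [Xseq, if_pos (by omega)]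

variable {u₀ p r n₀} in
theorem Xseq_two_mul_add_two_eqOn_zero {k : ℕ}
    (h : EqOn (Xseq u₀ p r n₀ (2 * k + 1)) 0 (Icc (n₀ - k) (n₀ + k))) :
    EqOn (Xseq u₀ p r n₀ (2 * k + 2)) 0 (Icc (n₀ - k) (n₀ + k + 1)) := by
  rw [Xseq_two_mul_add_two]
  refine istar_eqOn_zero (by omega) (by omega) fun s hs => ?_
  simp [h ⟨hs.1, Int.lt_add_one_iff.mp hs.2⟩]

theorem Xseq_two_mul_add_one_eqOn_zero (k : ℕ) :
    EqOn (Xseq u₀ p r n₀ (2 * k + 1)) 0 (Icc (n₀ - k) (n₀ + k)) := by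
  induction k with
  | zero =>
    rw [Xseq_two_mul_add_one]
    exact istar_eqOn_zero (by simp) (by simp) (by simp)
  | succ k ih =>
    have heven := Xseq_two_mul_add_two_eqOn_zero ih
    rw [Xseq_two_mul_add_one, show 2 * (k + 1) = 2 * k + 2 by ring]
    refine istar_eqOn_zero (by omega) (by omega) fun s ⟨hs₁, hs₂⟩ => ?_
    push_cast at hs₁ hs₂
    have hs : s + 1 ∈ Icc (n₀ - k) (n₀ + k + 1) := ⟨by omega, by omega⟩
    simp [heven hs]

end

theorem Xseq_vanishing_general (u₀ p r : ℤ → ℂ) (n₀ : ℤ) :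
    ∀ k : ℕ, 1 ≤ k → ∀ m : ℤ, n₀ - k + 1 ≤ m → m ≤ n₀ + k →
      Xseq u₀ p r n₀ (2 * k) m = 0 := by
  rintro (_ | k) hk m hm₁ hm₂
  · omega
  exact Xseq_two_mul_add_two_eqOn_zero (Xseq_two_mul_add_one_eqOn_zero u₀ p r n₀ k)
    ⟨by omega, by omega⟩

/-- Lemma 1(i), first part: vanishing of `X⁽²ᵏ⁾` near the base point. -/
theorem Xseq_vanishing (u₀ p r : ℤ → ℂ) (n₀ : ℤ)
    (hp : ∀ n, p n ≠ 0) (hu₀ : ∀ n, u₀ n ≠ 0) :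
    ∀ k : ℕ, 1 ≤ k → ∀ m : ℤ, n₀ - k + 1 ≤ m → m ≤ n₀ + k →
      Xseq u₀ p r n₀ (2 * k) m = 0 :=
  Xseq_vanishing_general u₀ p r n₀
end

section
/- Let u₀ be a nonvanishing solution of Δ(p(n-1)Δu(n-1)) + q(n)u(n) = 0, with p nonvanishing. Define u₂(n) = u₀(n) Σ_{k=0}^{|n-n₀|-1} λ^k Y^{(2k+1)}(n) for n ≠ n₀, and u₂(n₀) = 0, where the Y^{(i)} are defined by the recursive indefinite-sum relations from u₀, p, r at base point n₀. Then u₂ solves Δ(p(n-1)Δu(n-1)) + q(n)u(n) = λ r(n) u(n) for all n. -/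
open Finset

lemma istar_add_one (n₀ : ℤ) (f : ℤ → ℂ) (m : ℤ) :
    istar n₀ f (m + 1) = istar n₀ f m + f m := by
  unfold istar
  rcases le_or_gt n₀ m with h | h
  · rw [if_pos (by omega), if_pos h, sum_Ico_add_eq_sum_Ico_add_one h]
  · rw [if_neg (not_le.mpr h), ← insert_Ico_add_one_left_eq_Ico h, sum_insert (by simp)]
    split_ifs with h'
    · rw [show m + 1 = n₀ by omega, Ico_self]; simp
    · ring

lemma istar_eq_zero_of_forall (n₀ : ℤ) (f : ℤ → ℂ) (n : ℤ)
    (hf : ∀ j, min n₀ n ≤ j → j < max n₀ n → f j = 0) : istar n₀ f n = 0 := by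
  unfold istar
  split_ifs with h
  · exact sum_eq_zero fun j hj => hf j (by grind) (by grind)
  · rw [sum_eq_zero fun j hj => hf j (by grind) (by grind), neg_zero]

section Yseq

variable (u₀ p r : ℤ → ℂ) (n₀ : ℤ)

lemma Yseq_two_mul_add_one (k : ℕ) :
    Yseq u₀ p r n₀ (2 * k + 1) =
      istar n₀ (fun s => Yseq u₀ p r n₀ (2 * k) s / (p s * u₀ s * u₀ (s + 1))) := by
  rw [Yseq, if_neg (by omega)]

lemma Yseq_two_mul_add_two (k : ℕ) :
    Yseq u₀ p r n₀ (2 * k + 2) =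
      istar n₀ (fun s => u₀ (s + 1) ^ 2 * Yseq u₀ p r n₀ (2 * k + 1) (s + 1) * r (s + 1)) := by
  rw [Yseq, if_pos (by omega)]

lemma Yseq_two_mul_add_two_eq_zero {k : ℕ}
    (hodd : ∀ m ∈ Icc (n₀ - k) (n₀ + k), Yseq u₀ p r n₀ (2 * k + 1) m = 0)
    {n : ℤ} (hn : n ∈ Ico (n₀ - (k + 1)) (n₀ + (k + 1))) : Yseq u₀ p r n₀ (2 * k + 2) n = 0 := by
  rw [Yseq_two_mul_add_two]
  refine istar_eq_zero_of_forall _ _ _ fun s hs hs' => ?_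
  rw [hodd (s + 1) (by grind), mul_zero, zero_mul]

lemma Yseq_two_mul_add_one_eq_zero {k : ℕ}
    (heven : ∀ m ∈ Ico (n₀ - k) (n₀ + k), Yseq u₀ p r n₀ (2 * k) m = 0)
    {n : ℤ} (hn : n ∈ Icc (n₀ - k) (n₀ + k)) : Yseq u₀ p r n₀ (2 * k + 1) n = 0 := by
  rw [Yseq_two_mul_add_one]
  refine istar_eq_zero_of_forall _ _ _ fun s hs hs' => ?_
  rw [heven s (by grind), zero_div]

lemma Yseq_two_mul_add_one_eq_zero_of_natAbs_le {k : ℕ} {n : ℤ} (hn : (n - n₀).natAbs ≤ k) :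
    Yseq u₀ p r n₀ (2 * k + 1) n = 0 := by
  induction k generalizing n with
  | zero => exact Yseq_two_mul_add_one_eq_zero _ _ _ _ (by simp) (by simp; omega)
  | succ k ih =>
    refine Yseq_two_mul_add_one_eq_zero _ _ _ _ (fun m hm => ?_) (by simp; omega)
    exact Yseq_two_mul_add_two_eq_zero _ _ _ _ (fun m hm => ih (by simp at hm; omega))
      (by push_cast at hm ⊢; exact hm)

end Yseq

def jacobiOp (p q u : ℤ → ℂ) (n : ℤ) : ℂ :=
  p n * (u (n + 1) - u n) - p (n - 1) * (u n - u (n - 1)) + q n * u n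

lemma mul_jacobiOp_mul (p q u v : ℤ → ℂ) (n : ℤ) :
    u n * jacobiOp p q (u * v) n =
      p n * u n * u (n + 1) * (v (n + 1) - v n)
        - p (n - 1) * u (n - 1) * u (n - 1 + 1) * (v (n - 1 + 1) - v (n - 1))
        + u n * v n * jacobiOp p q u n := by
  simp only [jacobiOp, Pi.mul_apply, sub_add_cancel]
  ring

section PartialSums

variable (u₀ p r : ℤ → ℂ) (n₀ : ℤ) (lam : ℂ)

noncomputable def oddPartialSum (N : ℕ) (m : ℤ) : ℂ :=
  ∑ k ∈ range N, lam ^ k * Yseq u₀ p r n₀ (2 * k + 1) m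

noncomputable def evenPartialSum (N : ℕ) (m : ℤ) : ℂ :=
  ∑ k ∈ range N, lam ^ k * Yseq u₀ p r n₀ (2 * k) m

lemma oddPartialSum_eq_of_natAbs_le {N : ℕ} {m : ℤ} (hN : (m - n₀).natAbs ≤ N) :
    oddPartialSum u₀ p r n₀ lam N m = oddPartialSum u₀ p r n₀ lam (m - n₀).natAbs m := by
  refine (sum_subset (range_subset_range.mpr hN) fun k _ hk => ?_).symm
  rw [Yseq_two_mul_add_one_eq_zero_of_natAbs_le _ _ _ _ (by simpa using hk), mul_zero]

lemma mul_sub_oddPartialSum {m : ℤ} (hp : p m ≠ 0) (hu : u₀ m ≠ 0) (hu' : u₀ (m + 1) ≠ 0)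
    (N : ℕ) :
    p m * u₀ m * u₀ (m + 1) * (oddPartialSum u₀ p r n₀ lam N (m + 1)
      - oddPartialSum u₀ p r n₀ lam N m) = evenPartialSum u₀ p r n₀ lam N m := by
  simp only [oddPartialSum, evenPartialSum, ← sum_sub_distrib, mul_sum, Yseq_two_mul_add_one,
    istar_add_one]
  refine sum_congr rfl fun k _ => ?_
  field_simp
  ring

lemma evenPartialSum_succ_sub (N : ℕ) (m : ℤ) :
    evenPartialSum u₀ p r n₀ lam (N + 1) (m + 1) - evenPartialSum u₀ p r n₀ lam (N + 1) m =
      lam * r (m + 1) * u₀ (m + 1) ^ 2 * oddPartialSum u₀ p r n₀ lam N (m + 1) := by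
  simp only [evenPartialSum, oddPartialSum, sum_range_succ', mul_sum, mul_add,
    Yseq_two_mul_add_two, istar_add_one]
  rw [sum_add_distrib, show Yseq u₀ p r n₀ (2 * 0) (m + 1) = Yseq u₀ p r n₀ (2 * 0) m from rfl,
    add_sub_add_right_eq_sub, add_sub_cancel_left]
  exact sum_congr rfl fun k _ => by ring

end PartialSums

/-- Theorem 2, second solution: `u₂(n) = u₀(n) Σ_{k=0}^{|n-n₀|-1} λᵏ Y⁽²ᵏ⁺¹⁾(n)` (with
`u₂(n₀) = 0`) solves the Jacobi equation with spectral parameter `λ`. -/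
theorem u2_solves (u₀ p q r u₂ : ℤ → ℂ) (n₀ : ℤ) (lam : ℂ)
    (hp : ∀ n, p n ≠ 0) (hu₀ : ∀ n, u₀ n ≠ 0)
    (hsol : ∀ n : ℤ,
      p n * (u₀ (n + 1) - u₀ n) - p (n - 1) * (u₀ n - u₀ (n - 1)) + q n * u₀ n = 0)
    (hu₂ : ∀ n : ℤ, u₂ n = if n = n₀ then 0 else u₀ n *
        ∑ k ∈ Finset.range (n - n₀).natAbs, lam ^ k * Yseq u₀ p r n₀ (2 * k + 1) n) :
    ∀ n : ℤ,
      p n * (u₂ (n + 1) - u₂ n) - p (n - 1) * (u₂ n - u₂ (n - 1)) + q n * u₂ n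
        = lam * r n * u₂ n := by
  intro n
  have hu₂_eq : ∀ m (N : ℕ), (m - n₀).natAbs ≤ N →
      u₂ m = u₀ m * oddPartialSum u₀ p r n₀ lam N m := by
    intro m N hN
    rw [hu₂, oddPartialSum_eq_of_natAbs_le _ _ _ _ _ hN]
    split_ifs with hm
    · simp [oddPartialSum, hm]
    · rfl
  set N := (n - n₀).natAbs + 1
  -- near `n` we use `N + 1` terms, but `N` terms at `n` itself to absorb the shift `k ↦ k + 1`
  have hjacobi : jacobiOp p q u₂ n = jacobiOp p q (u₀ * oddPartialSum u₀ p r n₀ lam (N + 1)) n := by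
    simp only [jacobiOp, Pi.mul_apply, hu₂_eq (n + 1) (N + 1) (by omega),
      hu₂_eq n (N + 1) (by omega), hu₂_eq (n - 1) (N + 1) (by omega)]
  have hdiv := evenPartialSum_succ_sub u₀ p r n₀ lam N (n - 1)
  rw [sub_add_cancel] at hdiv
  change jacobiOp p q u₂ n = _
  rw [hjacobi, hu₂_eq n N (by omega)]
  refine mul_left_cancel₀ (hu₀ n) ?_
  rw [mul_jacobiOp_mul, mul_sub_oddPartialSum _ _ _ _ _ (hp n) (hu₀ n) (hu₀ (n + 1)),
    mul_sub_oddPartialSum _ _ _ _ _ (hp _) (hu₀ _) (hu₀ _), hdiv,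
    show jacobiOp p q u₀ n = 0 from hsol n]
  ring
end

section
/- Let p(n) > 0 and r(n) ≥ 0 for n ≥ a. If every solution of Δ(p(n-1)Δu(n-1)) = r(n)u(n) is bounded, then both Σ_{s=a}^{∞} Σ_{τ=a}^{s} r(τ)/p(s) < ∞ and Σ_{s=a}^{∞} 1/p(s) < ∞. -/
/-!
Take the solution `u` with `u(a-1) = 0`, `u(a) = 1`. Its flux `w(n) = p(n)Δu(n)` satisfies
`Δw(n-1) = r(n)u(n)`, so by induction `u ≥ 1` is nondecreasing and
`w(n) ≥ p(a-1) + Σ_{τ=a}^{n} r(τ)`. Dividing by `p(n)` and telescoping, the partial sums of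
`(p(a-1) + Σ_{τ=a}^{s} r(τ)) / p(s)` are bounded by `sup u - 1`, and this series dominates both
series of the theorem (the second up to the factor `p(a-1)`).
-/

open Finset

def IsSturmSolution (p r : ℤ → ℝ) (a : ℤ) (u : ℤ → ℝ) : Prop :=
  ∀ n : ℤ, a ≤ n → p n * (u (n + 1) - u n) - p (n - 1) * (u n - u (n - 1)) = r n * u n

theorem exists_two_step_recurrence {α : Type*} (a : ℤ) (F : ℤ → α → α → α) (c₀ c₁ : α) :
    ∃ u : ℤ → α, u (a - 1) = c₀ ∧ u a = c₁ ∧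
      ∀ n, a ≤ n → u (n + 1) = F n (u (n - 1)) (u n) := by
  let g : ℕ → α × α := fun k => Nat.rec (c₀, c₁) (fun k q => (q.2, F (a + k) q.1 q.2)) k
  refine ⟨fun n => (g (n - (a - 1)).toNat).1, by simp [g], by simp [g], fun n hn => ?_⟩
  obtain ⟨k, rfl⟩ := Int.le.dest hn
  simp only [show (a + k + 1 - (a - 1)).toNat = k + 2 by omega,
    show (a + k - (a - 1)).toNat = k + 1 by omega,
    show (a + k - 1 - (a - 1)).toNat = k by omega, g]

theorem IsSturmSolution.exists (p r : ℤ → ℝ) (a : ℤ) (hp : ∀ n, a ≤ n → p n ≠ 0) (c₀ c₁ : ℝ) :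
    ∃ u, IsSturmSolution p r a u ∧ u (a - 1) = c₀ ∧ u a = c₁ := by
  obtain ⟨u, h₀, h₁, hrec⟩ := exists_two_step_recurrence a
    (fun n x y => y + (p (n - 1) * (y - x) + r n * y) / p n) c₀ c₁
  refine ⟨u, fun n hn => ?_, h₀, h₁⟩
  rw [hrec n hn]
  field_simp [hp n hn]
  ring

theorem IsSturmSolution.one_le_and_sum_le_flux {p r : ℤ → ℝ} {a : ℤ} {u : ℤ → ℝ}
    (hu : IsSturmSolution p r a u) (hp : ∀ n, a - 1 ≤ n → 0 < p n) (hr : ∀ n, a ≤ n → 0 ≤ r n)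
    (h₀ : u (a - 1) = 0) (h₁ : u a = 1) (n : ℤ) (hn : a ≤ n) :
    1 ≤ u n ∧ p (a - 1) + ∑ τ ∈ Icc a n, r τ ≤ p n * (u (n + 1) - u n) := by
  induction n, hn using Int.leInduction with
  | base =>
    have h := hu a le_rfl
    simp only [h₀, h₁, Icc_self, sum_singleton] at h ⊢
    constructor <;> linarith
  | succ n hn ih =>
    obtain ⟨hun, hflux⟩ := ih
    have hS : 0 ≤ ∑ τ ∈ Icc a n, r τ := sum_nonneg fun τ hτ => hr τ (mem_Icc.1 hτ).1
    have hincr : 0 ≤ u (n + 1) - u n :=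
      (mul_nonneg_iff_of_pos_left (hp n (by omega))).1 (by linarith [hp (a - 1) le_rfl])
    have hr' : r (n + 1) ≤ r (n + 1) * u (n + 1) :=
      le_mul_of_one_le_right (hr (n + 1) (by omega)) (by linarith)
    have h := hu (n + 1) (by omega)
    rw [add_sub_cancel_right] at h
    rw [← insert_Icc_right_eq_Icc_add_one (by omega), sum_insert (by simp)]
    constructor <;> linarith

theorem summable_of_le_sub_of_bddAbove {f x : ℕ → ℝ} (hf : ∀ j, 0 ≤ f j)
    (hfx : ∀ j, f j ≤ x (j + 1) - x j) (hx : BddAbove (Set.range x)) : Summable f := by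
  obtain ⟨C, hC⟩ := hx
  refine summable_of_sum_range_le (c := C - x 0) hf fun N => ?_
  calc ∑ j ∈ range N, f j ≤ ∑ j ∈ range N, (x (j + 1) - x j) := sum_le_sum fun j _ => hfx j
    _ = x N - x 0 := sum_range_sub x N
    _ ≤ C - x 0 := by linarith [hC (Set.mem_range_self N)]

/-- Proposition 5 (Patula): if `p > 0`, `r ≥ 0` and all solutions of
`Δ(p(n-1)Δu(n-1)) = r(n)u(n)` are bounded, then `Σ Σ r(τ)/p(s) < ∞` and `Σ 1/p(s) < ∞`. -/
theorem bounded_solutions_imply_summable (p r : ℤ → ℝ) (a : ℤ)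
    (hp : ∀ n : ℤ, a - 1 ≤ n → 0 < p n) (hr : ∀ n : ℤ, a ≤ n → 0 ≤ r n)
    (hbdd : ∀ u : ℤ → ℝ,
      (∀ n : ℤ, a ≤ n →
        p n * (u (n + 1) - u n) - p (n - 1) * (u n - u (n - 1)) = r n * u n) →
      ∃ C : ℝ, ∀ n : ℤ, a - 1 ≤ n → |u n| ≤ C) :
    Summable (fun j : ℕ => (∑ τ ∈ Finset.Icc a (a + (j : ℤ)), r τ) / p (a + (j : ℤ))) ∧
    Summable (fun j : ℕ => 1 / p (a + (j : ℤ))) := by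
  obtain ⟨u, hu, h₀, h₁⟩ := IsSturmSolution.exists p r a (fun n hn => (hp n (by omega)).ne') 0 1
  obtain ⟨C, hC⟩ := hbdd u hu
  have hpa : 0 < p (a - 1) := hp (a - 1) le_rfl
  have hpj (j : ℕ) : 0 < p (a + j) := hp _ (by omega)
  have hS (j : ℕ) : 0 ≤ ∑ τ ∈ Icc a (a + j), r τ :=
    sum_nonneg fun τ hτ => hr τ (mem_Icc.1 hτ).1
  have hf : Summable fun j : ℕ => (p (a - 1) + ∑ τ ∈ Icc a (a + j), r τ) / p (a + j) := by
    refine summable_of_le_sub_of_bddAbove (x := fun j : ℕ => u (a + j))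
      (fun j => div_nonneg (by linarith [hS j]) (hpj j).le) (fun j => ?_)
      ⟨C, Set.forall_mem_range.2 fun j => (le_abs_self _).trans (hC _ (by omega))⟩
    rw [div_le_iff₀' (hpj j), Nat.cast_succ, ← add_assoc]
    exact (hu.one_le_and_sum_le_flux hp hr h₀ h₁ (a + j) (by omega)).2
  constructor
  · exact hf.of_nonneg_of_le (fun j => div_nonneg (hS j) (hpj j).le)
      fun j => div_le_div_of_nonneg_right (by linarith) (hpj j).le
  · refine (hf.div_const (p (a - 1))).of_nonneg_of_le (fun j => (one_div_pos.2 (hpj j)).le)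
      fun j => ?_
    rw [div_right_comm]
    exact div_le_div_of_nonneg_right ((one_le_div hpa).2 (by linarith [hS j])) (hpj j).le
end

section
/- Let p : N_a → ℂ with p(n) ≠ 0 for all n, and r : N_a → ℂ. If Σ_{s=a}^{∞} Σ_{τ=a}^{s} |r(τ)|/|p(s)| < ∞ and Σ_{s=a}^{∞} 1/|p(s)| < ∞, then every solution of Δ(p(n-1)Δu(n-1)) = r(n)u(n) is bounded. -/
/-!
Write `v n = p n * (u (n + 1) - u n)`. The equation says `v n - v (n - 1) = r n * u n`, so
`v` is `v (a - 1)` plus a partial sum of `r * u`. Hence the running maximum `M j` of `‖u‖` on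
`[a - 1, a + j]` satisfies `M (j + 1) ≤ (1 + R j / ‖p (a + j)‖) * M j + ‖v (a - 1)‖ / ‖p (a + j)‖`
with `R j = ∑_{τ=a}^{a+j} ‖r τ‖`, and both coefficient sequences are summable by hypothesis, so the
discrete Grönwall inequality bounds `M` uniformly.
-/

open Finset Real

theorem discrete_gronwall_of_summable {x b c : ℕ → ℝ} (hx₀ : 0 ≤ x 0)
    (hx : ∀ n, x (n + 1) ≤ (1 + c n) * x n + b n) (hb : ∀ n, 0 ≤ b n) (hc : ∀ n, 0 ≤ c n)
    (hbs : Summable b) (hcs : Summable c) (n : ℕ) :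
    x n ≤ (x 0 + ∑' k, b k) * exp (∑' k, c k) :=
  calc x n ≤ (x 0 + ∑ k ∈ Ico 0 n, b k) * exp (∑ k ∈ Ico 0 n, c k) :=
        discrete_gronwall hx₀ (fun n _ ↦ hx n) (fun n _ ↦ hc n) (fun n _ ↦ hb n) n.zero_le
    _ ≤ (x 0 + ∑' k, b k) * exp (∑' k, c k) := by
        gcongr
        · exact add_nonneg hx₀ (tsum_nonneg hb)
        · exact hbs.sum_le_tsum _ fun k _ ↦ hb k
        · exact hcs.sum_le_tsum _ fun k _ ↦ hc k

theorem eq_add_sum_Icc_of_sub_eq {E : Type*} [AddCommGroup E] {v w : ℤ → E} {a : ℤ}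
    (h : ∀ n, a ≤ n → v n - v (n - 1) = w n) {b : ℤ} (hb : a - 1 ≤ b) :
    v b = v (a - 1) + ∑ τ ∈ Icc a b, w τ := by
  induction b, hb using Int.leInduction with
  | base => simp
  | succ b hb ih =>
    rw [← insert_Icc_right_eq_Icc_add_one (by omega), sum_insert (by simp), ← h (b + 1) (by omega),
      add_sub_cancel_right, ih]
    abel

section SecondOrderEquation

variable {p r u : ℤ → ℂ} {a : ℤ}

variable (p u) in
def quasiDifference (n : ℤ) : ℂ := p n * (u (n + 1) - u n)

theorem quasiDifference_eq_add_sum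
    (hu : ∀ n : ℤ, a ≤ n → p n * (u (n + 1) - u n) - p (n - 1) * (u n - u (n - 1)) = r n * u n)
    {b : ℤ} (hb : a - 1 ≤ b) :
    quasiDifference p u b = quasiDifference p u (a - 1) + ∑ τ ∈ Icc a b, r τ * u τ :=
  eq_add_sum_Icc_of_sub_eq (fun n hn ↦ by simpa [quasiDifference] using hu n hn) hb

variable (u a) in
noncomputable def runningMaxNorm (j : ℕ) : ℝ :=
  (Icc (a - 1) (a + j)).sup' (nonempty_Icc.2 (by omega)) fun n ↦ ‖u n‖

theorem norm_le_runningMaxNorm {j : ℕ} {n : ℤ} (hn : n ∈ Icc (a - 1) (a + j)) :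
    ‖u n‖ ≤ runningMaxNorm u a j :=
  le_sup' (fun n ↦ ‖u n‖) hn

theorem runningMaxNorm_nonneg (j : ℕ) : 0 ≤ runningMaxNorm u a j :=
  (norm_nonneg _).trans (norm_le_runningMaxNorm (mem_Icc.2 ⟨le_rfl, by omega⟩))

theorem runningMaxNorm_succ (j : ℕ) :
    runningMaxNorm u a (j + 1) = max ‖u (a + j + 1)‖ (runningMaxNorm u a j) := by
  have hIcc : insert (a + j + 1) (Icc (a - 1) (a + j)) = Icc (a - 1) (a + (j + 1 : ℕ)) := by
    push_cast
    rw [← add_assoc, insert_Icc_right_eq_Icc_add_one (by omega)]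
  exact (sup'_congr _ hIcc.symm fun _ _ ↦ rfl).trans (sup'_insert _ _)

theorem norm_quasiDifference_le
    (hu : ∀ n : ℤ, a ≤ n → p n * (u (n + 1) - u n) - p (n - 1) * (u n - u (n - 1)) = r n * u n)
    (j : ℕ) :
    ‖quasiDifference p u (a + j)‖ ≤
      ‖quasiDifference p u (a - 1)‖ + (∑ τ ∈ Icc a (a + j), ‖r τ‖) * runningMaxNorm u a j := by
  rw [quasiDifference_eq_add_sum hu (by omega), sum_mul]
  calc _ ≤ ‖quasiDifference p u (a - 1)‖ + ∑ τ ∈ Icc a (a + j), ‖r τ * u τ‖ :=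
        (norm_add_le _ _).trans (by gcongr; exact norm_sum_le _ _)
    _ ≤ _ := by
        gcongr with τ hτ
        rw [norm_mul]
        exact mul_le_mul_of_nonneg_left
          (norm_le_runningMaxNorm (Icc_subset_Icc (by omega) le_rfl hτ)) (norm_nonneg _)

theorem runningMaxNorm_succ_le (hp : ∀ n : ℤ, a - 1 ≤ n → p n ≠ 0)
    (hu : ∀ n : ℤ, a ≤ n → p n * (u (n + 1) - u n) - p (n - 1) * (u n - u (n - 1)) = r n * u n)
    (j : ℕ) :
    runningMaxNorm u a (j + 1) ≤
      (1 + (∑ τ ∈ Icc a (a + j), ‖r τ‖) / ‖p (a + j)‖) * runningMaxNorm u a j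
        + ‖quasiDifference p u (a - 1)‖ / ‖p (a + j)‖ := by
  set n := a + (j : ℤ)
  set M := runningMaxNorm u a j
  have hM₀ : 0 ≤ M := runningMaxNorm_nonneg j
  have hun : u (n + 1) = u n + quasiDifference p u n / p n := by
    rw [quasiDifference, mul_div_cancel_left₀ _ (hp n (by omega))]
    ring
  have hnorm_succ : ‖u (n + 1)‖ ≤
      M + (‖quasiDifference p u (a - 1)‖ + (∑ τ ∈ Icc a n, ‖r τ‖) * M) / ‖p n‖ :=
    calc ‖u (n + 1)‖ ≤ ‖u n‖ + ‖quasiDifference p u n‖ / ‖p n‖ := by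
          rw [hun, ← norm_div]
          exact norm_add_le _ _
      _ ≤ _ := by
          gcongr
          · exact norm_le_runningMaxNorm (mem_Icc.2 ⟨by omega, le_rfl⟩)
          · exact norm_quasiDifference_le hu j
  rw [runningMaxNorm_succ]
  refine max_le (hnorm_succ.trans_eq (by ring)) ?_
  calc M ≤ M + ((∑ τ ∈ Icc a n, ‖r τ‖) / ‖p n‖ * M
          + ‖quasiDifference p u (a - 1)‖ / ‖p n‖) :=
        le_add_of_nonneg_right (add_nonneg (mul_nonneg (by positivity) hM₀) (by positivity))
    _ = _ := by ring

end SecondOrderEquation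

/-- Theorem 6: if `Σ Σ |r(τ)|/|p(s)| < ∞` and `Σ 1/|p(s)| < ∞` (with `p` nonvanishing),
then all solutions of `Δ(p(n-1)Δu(n-1)) = r(n)u(n)` are bounded. -/
theorem summable_implies_bounded_solutions (p r : ℤ → ℂ) (a : ℤ)
    (hp : ∀ n : ℤ, a - 1 ≤ n → p n ≠ 0)
    (h1 : Summable (fun j : ℕ =>
      (∑ τ ∈ Finset.Icc a (a + (j : ℤ)), ‖r τ‖) / ‖p (a + (j : ℤ))‖))
    (h2 : Summable (fun j : ℕ => 1 / ‖p (a + (j : ℤ))‖)) :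
    ∀ u : ℤ → ℂ,
      (∀ n : ℤ, a ≤ n →
        p n * (u (n + 1) - u n) - p (n - 1) * (u n - u (n - 1)) = r n * u n) →
      ∃ C : ℝ, ∀ n : ℤ, a - 1 ≤ n → ‖u n‖ ≤ C := by
  intro u hu
  have hbound := discrete_gronwall_of_summable (runningMaxNorm_nonneg 0)
    (runningMaxNorm_succ_le hp hu) (fun _ ↦ by positivity) (fun _ ↦ by positivity)
    (by simpa only [mul_one_div] using h2.mul_left ‖quasiDifference p u (a - 1)‖) h1
  refine ⟨_, fun n hn ↦ (norm_le_runningMaxNorm (j := (n - a).toNat) ?_).trans (hbound _)⟩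
  exact mem_Icc.2 ⟨hn, by omega⟩
end

section
/- Let p(n) > 0 and r(n) ≥ 0. For every solution u of Δ(p(n-1)Δu(n-1)) = r(n)u(n), the sequence φ(n) = p(n)Δu(n) is bounded if and only if Σ_{s=a}^{∞} Σ_{τ=a}^{s} r(s+1)/p(τ) < ∞. -/
/-!
Write `φ = pΔu`, so that the equation reads `φ(n) - φ(n-1) = r(n) u(n)` and `Δu = φ / p`.

If the double series converges, the majorant `ψ(n) = |φ(a)| + |u(a)| + Σ_{a<k≤n} r(k) |u(k)|`
of `|φ|` satisfies `ψ(n+1) ≤ ψ(n) (1 + r(n+1) (1 + Σ_{a≤τ≤n} 1/p(τ)))`, and these coefficients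
are summable because `Σ_{a≤τ<k} 1/p(τ) ≥ 1/p(a)`; a discrete Gronwall inequality bounds `ψ`.

Conversely, the solution with `u(a-1) = 0`, `u(a) = 1` is nonnegative and nondecreasing, and
`φ ≥ φ(a-1) = p(a-1)`, so `u(k) ≥ p(a-1) Σ_{a≤τ<k} 1/p(τ)`. Hence the partial sums of the series
are at most `(φ(n) - φ(a)) / p(a-1) = Σ_{a<k≤n} r(k) u(k) / p(a-1)`, which `φ` keeps bounded.
-/

open Finset Real

theorem Int.sum_Ico_sub {M : Type*} [AddCommGroup M] (f : ℤ → M) {m n : ℤ} (h : m ≤ n) :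
    ∑ i ∈ Ico m n, (f (i + 1) - f i) = f n - f m := by
  induction n, h using Int.leInduction with
  | base => simp
  | succ n hmn ih => rw [← sum_Ico_add_eq_sum_Ico_add_one hmn, ih]; abel

theorem Int.sum_Ioc_add_one_right {M : Type*} [AddCommMonoid M] (f : ℤ → M) {m n : ℤ}
    (h : m ≤ n) : ∑ k ∈ Ioc m (n + 1), f k = ∑ k ∈ Ioc m n, f k + f (n + 1) := by
  rw [← insert_Ioc_right_eq_Ioc_add_one h, sum_insert (by simp), add_comm]

theorem Int.le_mul_exp_sum_of_le_mul_one_add {x c : ℤ → ℝ} {m : ℤ} (hx : 0 ≤ x m)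
    (hc : ∀ n, m < n → 0 ≤ c n) (h : ∀ n, m ≤ n → x (n + 1) ≤ x n * (1 + c (n + 1))) :
    ∀ n, m ≤ n → x n ≤ x m * exp (∑ k ∈ Ioc m n, c k) := by
  intro n hmn
  induction n, hmn using Int.leInduction with
  | base => simp
  | succ n hmn ih =>
    have hc' : 0 ≤ c (n + 1) := hc _ (by omega)
    calc x (n + 1) ≤ x n * (1 + c (n + 1)) := h n hmn
      _ ≤ x m * exp (∑ k ∈ Ioc m n, c k) * exp (c (n + 1)) :=
        mul_le_mul ih (by linarith [add_one_le_exp (c (n + 1))]) (by linarith)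
          (mul_nonneg hx (exp_pos _).le)
      _ = x m * exp (∑ k ∈ Ioc m (n + 1), c k) := by
        rw [Int.sum_Ioc_add_one_right _ hmn, exp_add, mul_assoc]

theorem sum_range_sum_Icc_div_eq_sum_Ioc (p r : ℤ → ℝ) (a : ℤ) (N : ℕ) :
    ∑ j ∈ range N, ∑ τ ∈ Icc a (a + (j : ℤ)), r (a + (j : ℤ) + 1) / p τ =
      ∑ k ∈ Ioc a (a + N), r k * ∑ τ ∈ Ico a k, (p τ)⁻¹ := by
  induction N with
  | zero => simp
  | succ N ih =>
    rw [sum_range_succ, ih, Nat.cast_succ, ← add_assoc, Int.sum_Ioc_add_one_right _ (by omega),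
      ← Ico_add_one_right_eq_Icc, mul_sum]
    simp only [div_eq_mul_inv]

namespace DiscreteSturmLiouville

def quasiDeriv (p u : ℤ → ℝ) (n : ℤ) : ℝ := p n * (u (n + 1) - u n)

def IsSolution (p r : ℤ → ℝ) (a : ℤ) (u : ℤ → ℝ) : Prop :=
  ∀ n, a ≤ n → p n * (u (n + 1) - u n) - p (n - 1) * (u n - u (n - 1)) = r n * u n

noncomputable def majorant (p r : ℤ → ℝ) (a : ℤ) (u : ℤ → ℝ) (n : ℤ) : ℝ :=
  |quasiDeriv p u a| + |u a| + ∑ k ∈ Ioc a n, r k * |u k|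

/-- `solutionSeq p r a x y j` is `u (a - 1 + j)` for the solution with `u (a - 1) = x`,
`u a = y`. -/
noncomputable def solutionSeq (p r : ℤ → ℝ) (a : ℤ) (x y : ℝ) : ℕ → ℝ
  | 0 => x
  | 1 => y
  | j + 2 => solutionSeq p r a x y (j + 1) +
      (p (a + j - 1) * (solutionSeq p r a x y (j + 1) - solutionSeq p r a x y j) +
        r (a + j) * solutionSeq p r a x y (j + 1)) / p (a + j)

theorem exists_isSolution (p r : ℤ → ℝ) (a : ℤ) (x y : ℝ) (hp : ∀ n, a ≤ n → p n ≠ 0) :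
    ∃ u, u (a - 1) = x ∧ u a = y ∧ IsSolution p r a u := by
  refine ⟨fun n => solutionSeq p r a x y (n - (a - 1)).toNat, by simp [solutionSeq],
    by simp [solutionSeq], fun n hn => ?_⟩
  obtain ⟨j, rfl⟩ := Int.le.dest hn
  have e₁ : (a + j - 1 - (a - 1)).toNat = j := by omega
  have e₂ : (a + j - (a - 1)).toNat = j + 1 := by omega
  have e₃ : (a + j + 1 - (a - 1)).toNat = j + 2 := by omega
  simp only [e₁, e₂, e₃, solutionSeq]
  field_simp [hp _ hn]
  ring

variable {p r u : ℤ → ℝ} {a m n : ℤ}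

theorem sub_eq_sum_quasiDeriv_div (hp : ∀ τ ∈ Ico m n, p τ ≠ 0) (hmn : m ≤ n) :
    u n - u m = ∑ τ ∈ Ico m n, quasiDeriv p u τ / p τ := by
  rw [← Int.sum_Ico_sub u hmn]
  refine sum_congr rfl fun τ hτ => ?_
  rw [quasiDeriv, mul_div_cancel_left₀ _ (hp τ hτ)]

theorem abs_le_abs_add_mul_sum_inv {M : ℝ} (hp : ∀ τ ∈ Ico m n, 0 < p τ)
    (hM : ∀ τ ∈ Ico m n, |quasiDeriv p u τ| ≤ M) (hmn : m ≤ n) :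
    |u n| ≤ |u m| + M * ∑ τ ∈ Ico m n, (p τ)⁻¹ := by
  have h := sub_eq_sum_quasiDeriv_div (u := u) (fun τ hτ => (hp τ hτ).ne') hmn
  calc |u n| = |u m + ∑ τ ∈ Ico m n, quasiDeriv p u τ / p τ| := by rw [← h, add_sub_cancel]
    _ ≤ |u m| + ∑ τ ∈ Ico m n, |quasiDeriv p u τ / p τ| := by
      grw [abs_add_le, abs_sum_le_sum_abs]
    _ ≤ |u m| + M * ∑ τ ∈ Ico m n, (p τ)⁻¹ := by
      rw [mul_sum]
      gcongr with τ hτ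
      rw [abs_div, abs_of_pos (hp τ hτ), div_eq_mul_inv]
      exact mul_le_mul_of_nonneg_right (hM τ hτ) (inv_nonneg.2 (hp τ hτ).le)

theorem one_le_mul_sum_inv {k : ℤ} (hp : ∀ τ ∈ Ico a k, 0 < p τ) (hk : a < k) :
    1 ≤ p a * ∑ τ ∈ Ico a k, (p τ)⁻¹ :=
  have hpa := hp a (left_mem_Ico.2 hk)
  calc 1 = p a * (p a)⁻¹ := (mul_inv_cancel₀ hpa.ne').symm
    _ ≤ p a * ∑ τ ∈ Ico a k, (p τ)⁻¹ := by
      gcongr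
      exact single_le_sum (fun τ hτ => (inv_pos.2 (hp τ hτ)).le) (left_mem_Ico.2 hk)

theorem majorant_mono (hr : ∀ n, a < n → 0 ≤ r n) (hmn : m ≤ n) :
    majorant p r a u m ≤ majorant p r a u n := by
  unfold majorant
  gcongr _ + ?_
  exact sum_le_sum_of_subset_of_nonneg (Ioc_subset_Ioc_right hmn) fun k hk _ =>
    mul_nonneg (hr k (mem_Ioc.1 hk).1) (abs_nonneg _)

theorem abs_le_majorant (hr : ∀ n, a < n → 0 ≤ r n) (hn : a ≤ n) :
    |u a| ≤ majorant p r a u n :=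
  calc |u a| ≤ majorant p r a u a := by simp [majorant]
    _ ≤ majorant p r a u n := majorant_mono hr hn

namespace IsSolution

theorem quasiDeriv_add_one (hu : IsSolution p r a u) (hn : a - 1 ≤ n) :
    quasiDeriv p u (n + 1) = quasiDeriv p u n + r (n + 1) * u (n + 1) := by
  have h := hu (n + 1) (by omega)
  rw [add_sub_cancel_right] at h
  rw [quasiDeriv, quasiDeriv]
  linarith

theorem quasiDeriv_sub_eq_sum (hu : IsSolution p r a u) (hm : a - 1 ≤ m) (hmn : m ≤ n) :
    quasiDeriv p u n - quasiDeriv p u m = ∑ k ∈ Ioc m n, r k * u k := by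
  induction n, hmn using Int.leInduction with
  | base => simp
  | succ n hmn ih =>
    rw [Int.sum_Ioc_add_one_right _ hmn, hu.quasiDeriv_add_one (by omega)]
    linarith

theorem nonneg_and_quasiDeriv_nonneg (hp : ∀ n, a - 1 ≤ n → 0 < p n)
    (hr : ∀ n, a ≤ n → 0 ≤ r n) (hu : IsSolution p r a u) (h₀ : 0 ≤ u (a - 1))
    (h₁ : u (a - 1) ≤ u a) : ∀ n, a - 1 ≤ n → 0 ≤ u n ∧ 0 ≤ quasiDeriv p u n := by
  intro n hn
  induction n, hn using Int.leInduction with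
  | base => exact ⟨h₀, mul_nonneg (hp _ le_rfl).le (by rw [sub_add_cancel]; linarith)⟩
  | succ n hn ih =>
    have hmono : u n ≤ u (n + 1) :=
      sub_nonneg.1 ((mul_nonneg_iff_of_pos_left (hp n hn)).1 ih.2)
    have hu' : 0 ≤ u (n + 1) := ih.1.trans hmono
    refine ⟨hu', ?_⟩
    rw [hu.quasiDeriv_add_one hn]
    exact add_nonneg ih.2 (mul_nonneg (hr _ (by omega)) hu')

theorem sum_mul_sum_inv_le (hp : ∀ n, a - 1 ≤ n → 0 < p n) (hr : ∀ n, a ≤ n → 0 ≤ r n)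
    (hu : IsSolution p r a u) (h₀ : u (a - 1) = 0) (h₁ : u a = 1) {C : ℝ}
    (hC : ∀ n, a - 1 ≤ n → |quasiDeriv p u n| ≤ C) (hn : a ≤ n) :
    ∑ k ∈ Ioc a n, r k * ∑ τ ∈ Ico a k, (p τ)⁻¹ ≤ C / p (a - 1) := by
  have hpa : 0 < p (a - 1) := hp _ le_rfl
  have hnonneg := hu.nonneg_and_quasiDeriv_nonneg hp hr h₀.ge (by rw [h₀, h₁]; norm_num)
  have hφ : ∀ τ, a - 1 ≤ τ → p (a - 1) ≤ quasiDeriv p u τ := by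
    intro τ hτ
    have h := hu.quasiDeriv_sub_eq_sum le_rfl hτ
    have hφ₀ : quasiDeriv p u (a - 1) = p (a - 1) := by
      rw [quasiDeriv, sub_add_cancel, h₀, h₁]; ring
    have hsum : 0 ≤ ∑ k ∈ Ioc (a - 1) τ, r k * u k := sum_nonneg fun k hk =>
      mul_nonneg (hr k (by simp at hk; omega)) (hnonneg k (by simp at hk; omega)).1
    linarith
  have hsum_inv : ∀ k, a ≤ k → p (a - 1) * ∑ τ ∈ Ico a k, (p τ)⁻¹ ≤ u k := by
    intro k hk
    have h := sub_eq_sum_quasiDeriv_div (u := u)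
      (fun τ hτ => (hp τ (by simp at hτ; omega)).ne') hk
    rw [mul_sum]
    calc ∑ τ ∈ Ico a k, p (a - 1) * (p τ)⁻¹ ≤ ∑ τ ∈ Ico a k, quasiDeriv p u τ / p τ := by
          gcongr with τ hτ
          rw [div_eq_mul_inv]
          have := hp τ (by simp at hτ; omega)
          gcongr
          exact hφ τ (by simp at hτ; omega)
      _ ≤ u k := by linarith
  rw [le_div_iff₀ hpa, sum_mul]
  calc ∑ k ∈ Ioc a n, (r k * ∑ τ ∈ Ico a k, (p τ)⁻¹) * p (a - 1)
      ≤ ∑ k ∈ Ioc a n, r k * u k := by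
        refine sum_le_sum fun k hk => ?_
        rw [mul_assoc, mul_comm _ (p (a - 1))]
        exact mul_le_mul_of_nonneg_left (hsum_inv k (by simp at hk; omega))
          (hr k (by simp at hk; omega))
    _ = quasiDeriv p u n - quasiDeriv p u a := (hu.quasiDeriv_sub_eq_sum (by omega) hn).symm
    _ ≤ C := by linarith [hφ a (by omega), le_abs_self (quasiDeriv p u n), hC n (by omega)]

theorem abs_quasiDeriv_le_majorant (hr : ∀ n, a < n → 0 ≤ r n) (hu : IsSolution p r a u)
    (hn : a ≤ n) : |quasiDeriv p u n| ≤ majorant p r a u n := by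
  have h := hu.quasiDeriv_sub_eq_sum (by omega) hn
  calc |quasiDeriv p u n| = |quasiDeriv p u a + ∑ k ∈ Ioc a n, r k * u k| := by
        rw [← h, add_sub_cancel]
    _ ≤ |quasiDeriv p u a| + ∑ k ∈ Ioc a n, r k * |u k| := by
        grw [abs_add_le, abs_sum_le_sum_abs]
        gcongr with k hk
        rw [abs_mul, abs_of_nonneg (hr k (mem_Ioc.1 hk).1)]
    _ ≤ majorant p r a u n := by unfold majorant; linarith [abs_nonneg (u a)]

theorem majorant_add_one_le (hp : ∀ n, a ≤ n → 0 < p n) (hr : ∀ n, a < n → 0 ≤ r n)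
    (hu : IsSolution p r a u) (hn : a ≤ n) :
    majorant p r a u (n + 1) ≤
      majorant p r a u n * (1 + r (n + 1) * (1 + ∑ τ ∈ Ico a (n + 1), (p τ)⁻¹)) := by
  have hu_le : |u (n + 1)| ≤ |u a| + majorant p r a u n * ∑ τ ∈ Ico a (n + 1), (p τ)⁻¹ :=
    abs_le_abs_add_mul_sum_inv (fun τ hτ => hp τ (mem_Ico.1 hτ).1)
      (fun τ hτ => (hu.abs_quasiDeriv_le_majorant hr (mem_Ico.1 hτ).1).trans
        (majorant_mono hr (by simp at hτ; omega))) (by omega)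
  have hua := abs_le_majorant (p := p) (u := u) hr hn
  calc majorant p r a u (n + 1) = majorant p r a u n + r (n + 1) * |u (n + 1)| := by
        simp only [majorant]
        rw [Int.sum_Ioc_add_one_right _ hn]
        ring
    _ ≤ majorant p r a u n + r (n + 1) *
          (majorant p r a u n + majorant p r a u n * ∑ τ ∈ Ico a (n + 1), (p τ)⁻¹) := by
        gcongr
        · exact hr _ (by omega)
        · linarith
    _ = _ := by ring

theorem exists_abs_quasiDeriv_le (hp : ∀ n, a ≤ n → 0 < p n) (hr : ∀ n, a < n → 0 ≤ r n)
    (hu : IsSolution p r a u) {S : ℝ}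
    (hS : ∀ n, a ≤ n → ∑ k ∈ Ioc a n, r k * ∑ τ ∈ Ico a k, (p τ)⁻¹ ≤ S) :
    ∃ C, ∀ n, a - 1 ≤ n → |quasiDeriv p u n| ≤ C := by
  set c : ℤ → ℝ := fun k => r k * (1 + ∑ τ ∈ Ico a k, (p τ)⁻¹)
  have hinv : ∀ k, 0 ≤ ∑ τ ∈ Ico a k, (p τ)⁻¹ := fun k =>
    sum_nonneg fun τ hτ => (inv_pos.2 (hp τ (mem_Ico.1 hτ).1)).le
  have hc : ∀ k, a < k → 0 ≤ c k := fun k hk =>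
    mul_nonneg (hr k hk) (add_nonneg zero_le_one (hinv k))
  have hc_le : ∀ k, a < k → c k ≤ (p a + 1) * (r k * ∑ τ ∈ Ico a k, (p τ)⁻¹) := fun k hk => by
    have := one_le_mul_sum_inv (fun τ hτ => hp τ (mem_Ico.1 hτ).1) hk
    nlinarith [hr k hk]
  have hmaj : 0 ≤ majorant p r a u a := by simp [majorant]; positivity
  have hgronwall := Int.le_mul_exp_sum_of_le_mul_one_add hmaj hc
    fun n hn => hu.majorant_add_one_le hp hr hn
  refine ⟨|quasiDeriv p u (a - 1)| + majorant p r a u a * exp ((p a + 1) * S), fun n hn => ?_⟩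
  rcases hn.eq_or_lt with rfl | hn
  · exact le_add_of_nonneg_right (mul_nonneg hmaj (exp_pos _).le)
  calc |quasiDeriv p u n| ≤ majorant p r a u n := hu.abs_quasiDeriv_le_majorant hr (by omega)
    _ ≤ majorant p r a u a * exp (∑ k ∈ Ioc a n, c k) := hgronwall n (by omega)
    _ ≤ majorant p r a u a * exp ((p a + 1) * S) := by
        gcongr
        calc ∑ k ∈ Ioc a n, c k
            ≤ ∑ k ∈ Ioc a n, (p a + 1) * (r k * ∑ τ ∈ Ico a k, (p τ)⁻¹) :=
              sum_le_sum fun k hk => hc_le k (mem_Ioc.1 hk).1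
          _ ≤ (p a + 1) * S := by
              rw [← mul_sum]
              exact mul_le_mul_of_nonneg_left (hS n (by omega)) (by linarith [hp a le_rfl])
    _ ≤ _ := le_add_of_nonneg_left (abs_nonneg _)

end IsSolution

end DiscreteSturmLiouville

/-- Proposition 8: for `p > 0`, `r ≥ 0`, every solution `u` of
`Δ(p(n-1)Δu(n-1)) = r(n)u(n)` has `φ(n) = p(n)Δu(n)` bounded iff
`Σ_{s=a}^∞ Σ_{τ=a}^{s} r(s+1)/p(τ) < ∞`. -/
theorem quasi_derivative_bounded_iff (p r : ℤ → ℝ) (a : ℤ)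
    (hp : ∀ n : ℤ, a - 1 ≤ n → 0 < p n) (hr : ∀ n : ℤ, a ≤ n → 0 ≤ r n) :
    (∀ u : ℤ → ℝ,
      (∀ n : ℤ, a ≤ n →
        p n * (u (n + 1) - u n) - p (n - 1) * (u n - u (n - 1)) = r n * u n) →
      ∃ C : ℝ, ∀ n : ℤ, a - 1 ≤ n → |p n * (u (n + 1) - u n)| ≤ C) ↔
    Summable (fun j : ℕ => ∑ τ ∈ Finset.Icc a (a + (j : ℤ)), r (a + (j : ℤ) + 1) / p τ) := by
  open DiscreteSturmLiouville in
  have hf : ∀ j : ℕ, 0 ≤ ∑ τ ∈ Icc a (a + (j : ℤ)), r (a + (j : ℤ) + 1) / p τ := fun j =>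
    sum_nonneg fun τ hτ => div_nonneg (hr _ (by omega)) (hp τ (by simp at hτ; omega)).le
  constructor
  · intro hbdd
    obtain ⟨u, hu₀, hu₁, hu⟩ := exists_isSolution p r a 0 1 fun n hn => (hp n (by omega)).ne'
    obtain ⟨C, hC⟩ := hbdd u hu
    refine summable_of_sum_range_le (c := C / p (a - 1)) hf fun N => ?_
    rw [sum_range_sum_Icc_div_eq_sum_Ioc]
    exact hu.sum_mul_sum_inv_le hp hr hu₀ hu₁ hC (by omega)
  · intro hsum u hu
    refine IsSolution.exists_abs_quasiDeriv_le (fun n hn => hp n (by omega))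
      (fun n hn => hr n hn.le) hu
      (S := ∑' j : ℕ, ∑ τ ∈ Icc a (a + (j : ℤ)), r (a + (j : ℤ) + 1) / p τ) fun n hn => ?_
    obtain ⟨N, rfl⟩ := Int.le.dest hn
    rw [← sum_range_sum_Icc_div_eq_sum_Ioc]
    exact hsum.sum_le_tsum _ fun j _ => hf j
end

section
/- For the equation Δ²u(n-1) = λu(n) with base point n₀ = 0 and u₀ ≡ 1, the general solution is spanned by u₁(n) = Σ_{k=0}^{n-1} λ^k (n+k-1)^{(2k)}/(2k)! and u₂(n) = Σ_{k=0}^{n-1} λ^k (n+k)^{(2k+1)}/(2k+1)! for n > 0; in particular each of u₁ and u₂ satisfies u(n+1) - 2u(n) + u(n-1) = λu(n) for all n ≥ 1. -/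
/-!
Both solutions are `u_b(n) = ∑ₖ λᵏ (n+k-1+b)^{(2k+b)} / (2k+b)!`, with `b = 0` for `u₁` and
`b = 1` for `u₂`. For `n ≥ 0` the terms with `k ≥ n` vanish, so all long enough partial sums
agree. The second difference of a normalised falling factorial lowers its degree by two,
`Δ² [m^{(j+2)} / (j+2)!] = (m-1)^{(j)} / j!`, which sends the `(k+1)`-st term of `u_b` to `λ`
times its `k`-th term, while the `k = 0` term (`1` or `n`) has vanishing second difference.
Linear independence is read off from `u₁ 0 = 1`, `u₂ 0 = 0` and `u₂ 1 = 1`.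
-/

/-- The falling factorial `m⁽ʲ⁾ = m(m-1)⋯(m-j+1)`. -/
def ffall (m : ℤ) (j : ℕ) : ℤ := ∏ i ∈ Finset.range j, (m - i)

open Finset

lemma ffall_eq_zero_of_lt {m : ℤ} {j : ℕ} (h0 : 0 ≤ m) (h : m < j) : ffall m j = 0 :=
  prod_eq_zero (i := m.toNat) (mem_range.mpr (by omega)) (by rw [Int.toNat_of_nonneg h0, sub_self])

lemma ffall_add_one_succ (m : ℤ) (j : ℕ) : ffall (m + 1) (j + 1) = (m + 1) * ffall m j := by
  simp only [ffall, prod_range_succ', Nat.cast_add, Nat.cast_one, Nat.cast_zero, sub_zero,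
    add_sub_add_right_eq_sub, mul_comm]

lemma ffall_succ (m : ℤ) (j : ℕ) : ffall m (j + 1) = ffall m j * (m - j) :=
  prod_range_succ _ _

lemma ffall_add_one_sub_ffall (m : ℤ) (j : ℕ) :
    ffall (m + 1) (j + 1) - ffall m (j + 1) = (j + 1) * ffall m j := by
  rw [ffall_add_one_succ, ffall_succ]
  ring

lemma ffall_second_diff (m : ℤ) (j : ℕ) :
    ffall (m + 1) (j + 2) - 2 * ffall m (j + 2) + ffall (m - 1) (j + 2)
      = (j + 2) * (j + 1) * ffall (m - 1) j := by
  have h₁ := ffall_add_one_sub_ffall m (j + 1)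
  have h₂ := ffall_add_one_sub_ffall (m - 1) (j + 1)
  have h₃ := ffall_add_one_sub_ffall (m - 1) j
  rw [sub_add_cancel] at h₂ h₃
  push_cast at h₁ h₂
  linear_combination h₁ - h₂ + ((j : ℤ) + 2) * h₃

namespace DiscreteLaplacian

noncomputable def term (lam : ℂ) (b : ℕ) (n : ℤ) (k : ℕ) : ℂ :=
  lam ^ k * (ffall (n + k - 1 + b) (2 * k + b) : ℂ) / ((2 * k + b).factorial : ℂ)

noncomputable def sol (lam : ℂ) (b : ℕ) (n : ℤ) : ℂ :=
  ∑ k ∈ range (n.toNat + 1), term lam b n k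

variable (lam : ℂ) {b : ℕ}

lemma term_eq_zero {n : ℤ} {k : ℕ} (h0 : 1 ≤ n + k + b) (hk : n ≤ k) : term lam b n k = 0 := by
  rw [term, ffall_eq_zero_of_lt (by omega) (by push_cast; omega)]
  simp

lemma term_second_diff_zero (hb : b ≤ 1) (n : ℤ) :
    term lam b (n + 1) 0 - 2 * term lam b n 0 + term lam b (n - 1) 0 = 0 := by
  interval_cases b <;> simp [term, ffall] <;> ring

lemma term_second_diff_succ (n : ℤ) (k : ℕ) :
    term lam b (n + 1) (k + 1) - 2 * term lam b n (k + 1) + term lam b (n - 1) (k + 1)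
      = lam * term lam b n k := by
  have key := congrArg (Int.cast : ℤ → ℂ) (ffall_second_diff (n + k + b) (2 * k + b))
  push_cast at key
  have hfac : ((2 * k + b + 2).factorial : ℂ)
      = (2 * k + b + 2) * (2 * k + b + 1) * ((2 * k + b).factorial : ℂ) := by
    push_cast [Nat.factorial_succ]
    ring
  have hf : ((2 * k + b).factorial : ℂ) ≠ 0 := by exact_mod_cast Nat.factorial_ne_zero _
  have h₁ : (2 * k + b + 1 : ℂ) ≠ 0 := by exact_mod_cast Nat.succ_ne_zero (2 * k + b)
  have h₂ : (2 * k + b + 2 : ℂ) ≠ 0 := by exact_mod_cast Nat.succ_ne_zero (2 * k + b + 1)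
  simp only [term, show 2 * (k + 1) + b = 2 * k + b + 2 by ring, hfac]
  push_cast
  rw [show n + 1 + (k + 1) - 1 + b = n + k + b + 1 by ring,
    show n + (k + 1) - 1 + b = n + k + b by ring,
    show n - 1 + (k + 1) - 1 + b = n + k + b - 1 by ring,
    show n + k - 1 + b = n + k + b - 1 by ring]
  field_simp
  linear_combination lam ^ k * lam * key

lemma sum_range_succ_term_second_diff (hb : b ≤ 1) (n : ℤ) (N : ℕ) :
    ∑ k ∈ range (N + 1), term lam b (n + 1) k - 2 * ∑ k ∈ range (N + 1), term lam b n k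
        + ∑ k ∈ range (N + 1), term lam b (n - 1) k
      = lam * ∑ k ∈ range N, term lam b n k := by
  rw [mul_sum, mul_sum, ← sum_sub_distrib, ← sum_add_distrib, sum_range_succ',
    term_second_diff_zero lam hb, add_zero]
  exact sum_congr rfl fun k _ => term_second_diff_succ lam n k

lemma sum_range_term_eq_of_le {n : ℤ} {N₁ N₂ : ℕ} (h : N₁ ≤ N₂) (h0 : 1 ≤ n + N₁ + b)
    (hN₁ : n ≤ N₁) : ∑ k ∈ range N₁, term lam b n k = ∑ k ∈ range N₂, term lam b n k :=
  sum_subset (range_subset_range.mpr h) fun k _ hk => term_eq_zero lam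
    (by simp only [mem_range, not_lt] at hk; omega) (by simp only [mem_range, not_lt] at hk; omega)

lemma sum_range_term_eq_sol {n : ℤ} {N : ℕ} (hn : 0 ≤ n) (h0 : 1 ≤ n + N + b) (hN : n ≤ N) :
    ∑ k ∈ range N, term lam b n k = sol lam b n := by
  rcases le_total N (n.toNat + 1) with h | h
  · exact sum_range_term_eq_of_le lam h h0 hN
  · exact (sum_range_term_eq_of_le lam h (by omega) (by omega)).symm

lemma sol_second_diff (hb : b ≤ 1) {n : ℤ} (hn : 1 ≤ n) :
    sol lam b (n + 1) - 2 * sol lam b n + sol lam b (n - 1) = lam * sol lam b n := by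
  set N := n.toNat + 1
  conv_rhs => rw [← sum_range_term_eq_sol lam (n := n) (N := N) (by omega) (by omega) (by omega)]
  rw [← sum_range_term_eq_sol lam (n := n + 1) (N := N + 1) (by omega) (by omega) (by omega),
    ← sum_range_term_eq_sol lam (n := n - 1) (N := N + 1) (by omega) (by omega) (by omega),
    ← sum_range_term_eq_sol lam (n := n) (N := N + 1) (by omega) (by omega) (by omega)]
  exact sum_range_succ_term_second_diff lam hb n N

end DiscreteLaplacian

open DiscreteLaplacian

/-- For `Δ²u(n-1) = λu(n)`: the explicit sequences `u₁`, `u₂` both satisfy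
`u(n+1) - 2u(n) + u(n-1) = λu(n)` for `n ≥ 1`, and they are linearly independent. -/
theorem discrete_laplacian_solutions (lam : ℂ) (u₁ u₂ : ℤ → ℂ)
    (hu₁ : ∀ n : ℤ, u₁ n =
      ∑ k ∈ Finset.range (if 0 < n then n.toNat else (-n).toNat + 1),
        lam ^ k * (ffall (n + k - 1) (2 * k) : ℂ) / (Nat.factorial (2 * k) : ℂ))
    (hu₂ : ∀ n : ℤ, u₂ n = if n = 0 then 0 else
      ∑ k ∈ Finset.range n.natAbs,
        lam ^ k * (ffall (n + k) (2 * k + 1) : ℂ) / (Nat.factorial (2 * k + 1) : ℂ)) :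
    (∀ n : ℤ, 1 ≤ n → u₁ (n + 1) - 2 * u₁ n + u₁ (n - 1) = lam * u₁ n) ∧
    (∀ n : ℤ, 1 ≤ n → u₂ (n + 1) - 2 * u₂ n + u₂ (n - 1) = lam * u₂ n) ∧
    (∀ c d : ℂ, (∀ n : ℤ, c * u₁ n + d * u₂ n = 0) → c = 0 ∧ d = 0) := by
  have h₁ (n : ℤ) (hn : 0 ≤ n) : u₁ n = sol lam 0 n := by
    rw [hu₁, ← sum_range_term_eq_sol lam (N := if 0 < n then n.toNat else (-n).toNat + 1) hn
      (by split_ifs <;> omega) (by split_ifs <;> omega)]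
    exact sum_congr rfl fun k _ => by simp [term]
  have h₂ (n : ℤ) (hn : 0 ≤ n) : u₂ n = sol lam 1 n := by
    rw [hu₂, ← sum_range_term_eq_sol lam (N := n.natAbs) hn (by omega) (by omega)]
    split_ifs with h
    · simp [h]
    · exact sum_congr rfl fun k _ => by simp [term]
  refine ⟨fun n hn => ?_, fun n hn => ?_, fun c d h => ?_⟩
  · rw [h₁ _ (by omega), h₁ _ (by omega), h₁ _ (by omega)]
    exact sol_second_diff lam (by norm_num) hn
  · rw [h₂ _ (by omega), h₂ _ (by omega), h₂ _ (by omega)]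
    exact sol_second_diff lam (by norm_num) hn
  · have hc : c = 0 := by simpa [h₁, h₂, sol, term, ffall] using h 0
    have hd : d = 0 := by
      have h1 := h 1
      norm_num [h₁, h₂, hc, sol, term, ffall, sum_range_succ, prod_range_succ] at h1
      exact h1
    exact ⟨hc, hd⟩
end
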